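/- Let p be an odd prime, λ = (λ₁ > λ₂ > … > λ_k ≥ 1) a partition with multiplicities ρ₁, …, ρ_k ≥ 1, A_λ = ⊕_{i=1}^{k} (ℤ/p^{λ_i}ℤ)^{ρ_i} the associated finite abelian p-group, and G_λ = Aut(A_λ). Then H²(G_λ, A_λ) = 0 for the natural action of G_λ on A_λ. Moreover, for p = 2, H²(G_λ, A_λ) with the natural action is a finite abelian group annihilated by 4. -/

import Mathlib

/-- The multiplicative group structure on `AddAut A` that Mathlib had in the older version
(multiplication is composition); Mathlib now makes `AddAut A` an additive group instead. -/
instance AddAut.oldGroup (A : Type) [AddCommGroup A] : Group (AddAut A) where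
  mul g h := AddEquiv.trans h g
  one := AddEquiv.refl _
  inv := AddEquiv.symm
  mul_assoc _ _ _ := rfl
  one_mul _ := rfl
  mul_one _ := rfl
  inv_mul_cancel := AddEquiv.self_trans_symm

/-- The natural representation of `G = Aut(A)` on the abelian group `A`, given by
`g · a = g(a)`. -/
noncomputable def natRep (A : Type) [AddCommGroup A] : Representation ℤ (AddAut A) A where
  toFun g := AddMonoidHom.toIntLinearMap (AddEquiv.toAddMonoidHom g)
  map_one' := by ext a; rfl
  map_mul' g h := by ext a; rfl

/-- The finite abelian `p`-group `A_λ = ⊕_{i=1}^{k} (ℤ/p^{λ_i}ℤ)^{ρ_i}` associated to a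
partition `λ` with multiplicities `ρ`. -/
abbrev abelianPGroupOfPartition (p k : ℕ) (lam rho : Fin k → ℕ) : Type :=
  (i : Fin k) → Fin (rho i) → ZMod (p ^ lam i)

/-!
A central element of a group `G` that acts on a `G`-module `A` as a scalar `c` makes `c - 1`
annihilate `H²(G, A)`, since conjugation by it acts trivially on cohomology. For `G = Aut(A)`,
multiplication by any integer `n` that is bijective on `A` is such an element. For `A` of odd
order take `n = 2`, so `H² = 0`; for arbitrary `A` take `n = -1`, so `2 • H² = 0`.
-/

open groupCohomology

universe u

namespace groupCohomology

variable {k G : Type u} [CommRing k] [Group G] (A : Rep k G)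

/-- The coboundary is that of `x ↦ f (g, x) - f (x, g)`; this drops out of the cocycle identity
at `(x, g, y)`, `(x, y, g)` and `(g, x, y)`. -/
lemma central_act_sub_mem_coboundaries₂ {g : G} (hg : g ∈ Subgroup.center G)
    (f : cocycles₂ A) : (fun xy => A.ρ g (f xy) - f xy) ∈ coboundaries₂ A := by
  have hf := (mem_cocycles₂_def (f : G × G → A)).1 f.2
  refine ⟨fun x => f (g, x) - f (x, g), funext fun ⟨x, y⟩ => ?_⟩
  have hxgy := hf x g y
  have hxyg := hf x y g
  have hgxy := hf g x y
  rw [Subgroup.mem_center_iff.1 hg x, ← Subgroup.mem_center_iff.1 hg y] at hxgy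
  rw [d₁₂_hom_apply, map_sub]
  linear_combination (norm := abel) hxgy - hxyg - hgxy

lemma sub_one_smul_H2_eq_zero_of_central {g : G} (hg : g ∈ Subgroup.center G) {c : k}
    (hc : ∀ a, A.ρ g a = c • a) (x : H2 A) : (c - 1) • x = 0 := by
  induction x using H2_induction_on with
  | h f =>
    rw [← map_smul, H2π_eq_zero_iff]
    convert central_act_sub_mem_coboundaries₂ A hg f using 1
    funext xy
    change (c - 1) • f xy = _
    rw [hc, sub_smul, one_smul]

instance finite_H2 [Finite G] [Finite A] : Finite (H2 A) :=
  Finite.of_surjective (H2π A) ((ModuleCat.epi_iff_surjective _).1 inferInstance)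

end groupCohomology

section natRep

variable (M : Type) [AddCommGroup M]

noncomputable def AddAut.zsmul {n : ℤ} (hn : Function.Bijective (n • · : M → M)) : AddAut M :=
  AddEquiv.ofBijective (zsmulAddGroupHom n) hn

lemma AddAut.zsmul_mem_center {n : ℤ} (hn : Function.Bijective (n • · : M → M)) :
    AddAut.zsmul M hn ∈ Subgroup.center (AddAut M) :=
  Subgroup.mem_center_iff.2 fun h => DFunLike.ext _ _ fun a => map_zsmul h n a

lemma sub_one_smul_H2_natRep_eq_zero {n : ℤ} (hn : Function.Bijective (n • · : M → M))
    (x : H2 (Rep.of (natRep M))) : (n - 1) • x = 0 :=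
  (int_smul_eq_zsmul _ _ x).symm.trans
    (sub_one_smul_H2_eq_zero_of_central _ (AddAut.zsmul_mem_center M hn) (fun _ => rfl) x)

lemma subsingleton_H2_natRep_of_coprime_two (hM : (Nat.card M).Coprime 2) :
    Subsingleton (H2 (Rep.of (natRep M))) := by
  have h2 : Function.Bijective ((2 : ℤ) • · : M → M) := by
    simpa [ofNat_zsmul] using hM.nsmul_right_bijective
  refine subsingleton_of_forall_eq 0 fun x => ?_
  simpa using sub_one_smul_H2_natRep_eq_zero M h2 x

lemma two_smul_H2_natRep_eq_zero (x : H2 (Rep.of (natRep M))) : (2 : ℤ) • x = 0 := by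
  have hneg : Function.Bijective ((-1 : ℤ) • · : M → M) := by
    simpa using (neg_bijective : Function.Bijective (Neg.neg : M → M))
  simpa [show (-1 - 1 : ℤ) = -2 by norm_num] using sub_one_smul_H2_natRep_eq_zero M hneg x

end natRep

lemma card_abelianPGroupOfPartition (p k : ℕ) (lam rho : Fin k → ℕ) :
    Nat.card (abelianPGroupOfPartition p k lam rho) = ∏ i, (p ^ lam i) ^ rho i := by
  simp [Nat.card_pi]

open groupCohomology in
theorem H2_natural_action_of_partition_general (p k : ℕ) (lam rho : Fin k → ℕ) :
    (Odd p →
      Subsingleton (H2 (Rep.of (natRep (abelianPGroupOfPartition p k lam rho))))) ∧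
    (p = 2 →
      Finite (H2 (Rep.of (natRep (abelianPGroupOfPartition p k lam rho)))) ∧
      ∀ x : H2 (Rep.of (natRep (abelianPGroupOfPartition p k lam rho))),
        (4 : ℤ) • x = 0) := by
  refine ⟨fun hp => subsingleton_H2_natRep_of_coprime_two _ ?_, fun hp => ?_⟩
  · rw [card_abelianPGroupOfPartition]
    exact Nat.Coprime.prod_left fun i _ =>
      ((Nat.coprime_two_right.2 hp).pow_left _).pow_left _
  · subst hp
    refine ⟨inferInstance, fun x => ?_⟩
    rw [show (4 : ℤ) = 2 * 2 by norm_num, mul_smul, two_smul_H2_natRep_eq_zero]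

open groupCohomology in
/-- For a partition `λ₁ > … > λ_k ≥ 1` with multiplicities `ρᵢ ≥ 1`,
`A_λ = ⊕ (ℤ/p^{λᵢ}ℤ)^{ρᵢ}` and `G_λ = Aut(A_λ)` acting naturally: if `p` is an odd prime
then `H²(G_λ, A_λ) = 0`; and if `p = 2` then `H²(G_λ, A_λ)` is a finite abelian group
annihilated by `4`. -/
theorem H2_natural_action_of_partition (p k : ℕ) (hp : p.Prime) (hk : 0 < k)
    (lam rho : Fin k → ℕ) (hlam : StrictAnti lam) (hlam1 : ∀ i, 1 ≤ lam i)
    (hrho : ∀ i, 1 ≤ rho i) :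
    (Odd p →
      Subsingleton (H2 (Rep.of (natRep (abelianPGroupOfPartition p k lam rho))))) ∧
    (p = 2 →
      Finite (H2 (Rep.of (natRep (abelianPGroupOfPartition p k lam rho)))) ∧
      ∀ x : H2 (Rep.of (natRep (abelianPGroupOfPartition p k lam rho))),
        (4 : ℤ) • x = 0) :=
  H2_natural_action_of_partition_general p k lam rho
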